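/- arXiv:1412.7183 — 4 statements merged into one kernel-verified Lean document; each statement's English description precedes it below -/
import Mathlib

section
/- Let n ≥ 1. Every Lie subalgebra S of the Lie algebra of real 2n×2n matrices (with bracket [X,Y] = XY − YX) satisfying sp(2n,ℝ) ⊆ S ⊆ sl(2n,ℝ) is equal to sp(2n,ℝ) or to sl(2n,ℝ); in other words, there is no intermediate Lie subalgebra sp(2n,ℝ) ⊊ S ⊊ sl(2n,ℝ). -/
open Matrix

attribute [local instance 100] LieRing.ofAssociativeRing

/-- The standard symplectic matrix `J₀ = [[0, I], [−I, 0]]` (in `n × n` block form)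
as a real `2n × 2n` matrix. -/
def stdJ (n : ℕ) : Matrix (Fin n ⊕ Fin n) (Fin n ⊕ Fin n) ℝ :=
  Matrix.fromBlocks 0 1 (-1) 0

/-!
Let `A† = -J₀ Aᵀ J₀` be the adjoint for the symplectic form, so that `sp = {A | A† = -A}` and
`sl = sp ⊕ m₀` with `m₀ = {A | A† = A, tr A = 0}`. For the matrix units `E x y`, put
`F x y = E x y - (E x y)†` (`spUnit`, in `sp`) and `G x y = E x y + (E x y)†` (`mUnit`).
If `S ⊋ sp`, then `S` contains a nonzero `v ∈ m₀` (the part `X + X†` of any `X ∈ S \ sp`), and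
`S` is stable under `ad sp`. For `x ≠ y`, `(ad F x y)² v = -2 v y x • G x y`; if `v` is
diagonal, a single bracket `[F p q, v]` is already a multiple of `G p q`. Either way some
`G p q` with `p ≠ q, p ≠ q.swap` lies in `S`. Brackets with elements of `sp` move it to every
other such `G x y` and to the differences `G y y - G x x`, and these span `m₀`. Hence
`S ⊇ sp ⊕ m₀ = sl`.
-/

namespace Matrix

variable {n R : Type*} [Fintype n] [DecidableEq n] [CommSemiring R]

lemma single_mul_diagonal (i j : n) (c : R) (d : n → R) :
    single i j c * diagonal d = d j • single i j c := by
  ext a b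
  by_cases h : i = a ∧ j = b
  · obtain ⟨rfl, rfl⟩ := h
    simp [mul_comm]
  · simp [h]

lemma diagonal_mul_single (i j : n) (c : R) (d : n → R) :
    diagonal d * single i j c = d i • single i j c := by
  ext a b
  by_cases h : i = a ∧ j = b
  · obtain ⟨rfl, rfl⟩ := h
    simp
  · simp [h]

end Matrix

namespace SpSl

variable {l K : Type*}

local notation "𝔤" => Matrix (l ⊕ l) (l ⊕ l) K

section CommRing

variable [CommRing K]

def ε (x : l ⊕ l) : K := Sum.elim (fun _ => -1) (fun _ => 1) x

@[simp] lemma ε_inl (i : l) : (ε (Sum.inl i) : K) = -1 := rfl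

@[simp] lemma ε_inr (i : l) : (ε (Sum.inr i) : K) = 1 := rfl

@[simp] lemma ε_swap (x : l ⊕ l) : (ε x.swap : K) = -ε x := by cases x <;> simp

@[simp] lemma ε_mul_self (x : l ⊕ l) : (ε x * ε x : K) = 1 := by cases x <;> simp

/-- `-J₀ Aᵀ J₀`, written out using that `J₀` has entry `ε y` at `(x, y)` if `y = x.swap` and `0`
otherwise. -/
def sympAdj : 𝔤 →ₗ[K] 𝔤 where
  toFun A := of fun x y => ε x * ε y * A y.swap x.swap
  map_add' A B := by ext; simp [mul_add]
  map_smul' c A := by ext; simp; ring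

@[simp] lemma sympAdj_apply (A : 𝔤) (x y : l ⊕ l) :
    sympAdj A x y = ε x * ε y * A y.swap x.swap := rfl

@[simp] lemma sympAdj_sympAdj (A : 𝔤) : sympAdj (sympAdj A) = A := by
  ext x y
  simp only [sympAdj_apply, ε_swap, Sum.swap_swap]
  linear_combination A x y * (ε_mul_self (K := K) x * ε y * ε y + ε_mul_self (K := K) y)

lemma trace_sympAdj [Fintype l] (A : 𝔤) : trace (sympAdj A) = trace A := by
  simp only [trace, diag, sympAdj_apply, ε_mul_self, one_mul]
  exact Fintype.sum_equiv (Equiv.sumComm l l) _ _ fun _ => rfl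

variable [DecidableEq l]

lemma sympAdj_single (x y : l ⊕ l) (c : K) :
    sympAdj (single x y c) = (ε x * ε y * c) • single y.swap x.swap 1 := by
  ext a b
  by_cases h : y.swap = a ∧ x.swap = b
  · obtain ⟨rfl, rfl⟩ := h
    simp [mul_comm]
  · have h' : ¬(x = b.swap ∧ y = a.swap) := by grind
    simp [h, h']

lemma sympAdj_single_swap (x : l ⊕ l) :
    sympAdj (single x.swap x (1 : K)) = -single x.swap x 1 := by
  rw [sympAdj_single, ε_swap, neg_mul, ε_mul_self, mul_one, neg_one_smul, Sum.swap_swap]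

variable (K) in
def spUnit (x y : l ⊕ l) : 𝔤 :=
  single x y 1 - (ε x * ε y : K) • single y.swap x.swap 1

variable (K) in
def mUnit (x y : l ⊕ l) : 𝔤 :=
  single x y 1 + (ε x * ε y : K) • single y.swap x.swap 1

lemma mUnit_eq_add_sympAdj (x y : l ⊕ l) :
    mUnit K x y = single x y 1 + sympAdj (single x y 1) := by
  rw [mUnit, sympAdj_single, mul_one]

lemma sympAdj_spUnit (x y : l ⊕ l) : sympAdj (spUnit K x y) = -spUnit K x y := by
  simp only [spUnit, map_sub, map_smul, sympAdj_single, Sum.swap_swap, ε_swap, smul_smul]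
  match_scalars <;> rcases x with i | i <;> rcases y with j | j <;> simp

lemma mUnit_swap (x y : l ⊕ l) :
    mUnit K y.swap x.swap = (ε x * ε y : K) • mUnit K x y := by
  simp only [mUnit, smul_add, smul_smul, Sum.swap_swap, ε_swap, neg_mul_neg]
  rw [mul_mul_mul_comm, ε_mul_self, ε_mul_self, one_mul, one_smul, mul_comm, add_comm]

lemma mUnit_swap_self (x : l ⊕ l) : mUnit K x.swap x = 0 := by
  simp [mUnit]

variable [Fintype l]

lemma fromBlocks_mul_apply (A : 𝔤) (x y : l ⊕ l) :
    ((fromBlocks 0 1 (-1) 0 : 𝔤) * A) x y = -ε x * A x.swap y := by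
  rcases x with i | i <;> simp [mul_apply, Fintype.sum_sum_type, one_apply]

lemma mul_fromBlocks_apply (A : 𝔤) (x y : l ⊕ l) :
    (A * (fromBlocks 0 1 (-1) 0 : 𝔤)) x y = ε y * A x y.swap := by
  rcases y with j | j <;> simp [mul_apply, Fintype.sum_sum_type, one_apply]

lemma transpose_mul_add_mul_eq_zero_iff (X : 𝔤) :
    Xᵀ * (fromBlocks 0 1 (-1) 0 : 𝔤) + fromBlocks 0 1 (-1) 0 * X = 0 ↔ sympAdj X = -X := by
  simp only [← ext_iff, Matrix.add_apply, mul_fromBlocks_apply, fromBlocks_mul_apply,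
    transpose_apply, Matrix.zero_apply, sympAdj_apply, Matrix.neg_apply]
  constructor
  · intro h x y
    have hx := h x.swap y
    simp only [Sum.swap_swap, ε_swap] at hx
    linear_combination ε x * hx - X x y * ε_mul_self (K := K) x
  · intro h x y
    have hx := h x.swap y
    simp only [Sum.swap_swap, ε_swap] at hx
    linear_combination -ε x * hx - ε y * X y.swap x * ε_mul_self (K := K) x

lemma sum_smul_mUnit (Z : 𝔤) : ∑ x, ∑ y, Z x y • mUnit K x y = Z + sympAdj Z := by
  have hZ : ∑ x, ∑ y, Z x y • (single x y 1 : 𝔤) = Z := by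
    simp only [smul_single, smul_eq_mul, mul_one]
    exact (matrix_eq_sum_single Z).symm
  simp only [mUnit_eq_add_sympAdj, smul_add, Finset.sum_add_distrib, ← map_smul, ← map_sum, hZ]

lemma spUnit_mul_self {x y : l ⊕ l} (hxy : x ≠ y) : spUnit K x y * spUnit K x y = 0 := by
  rw [spUnit]
  simp only [sub_mul, mul_sub, smul_mul_assoc, mul_smul_comm,
    single_mul_single_of_ne _ _ _ _ hxy.symm,
    single_mul_single_of_ne _ _ _ _ (by grind : y ≠ y.swap),
    single_mul_single_of_ne _ _ _ _ (by grind : x.swap ≠ x),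
    single_mul_single_of_ne _ _ _ _ (by grind : x.swap ≠ y.swap), smul_zero, sub_zero]

lemma lie_spUnit_mUnit_left {p q x : l ⊕ l} (hpq' : p ≠ q.swap) (hxp : x ≠ p)
    (hxp' : x ≠ p.swap) (hxq : x ≠ q) (hxq' : x ≠ q.swap) :
    ⁅spUnit K x p, mUnit K p q⁆ = mUnit K x q := by
  rw [Ring.lie_def, spUnit, mUnit, mUnit]
  simp only [sub_mul, mul_sub, add_mul, mul_add, smul_mul_assoc, mul_smul_comm,
    single_mul_single_same, single_mul_single_of_ne _ _ _ _ hpq',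
    single_mul_single_of_ne _ _ _ _ hxq.symm,
    single_mul_single_of_ne _ _ _ _ (by grind : q ≠ p.swap),
    single_mul_single_of_ne _ _ _ _ (by grind : x.swap ≠ p),
    single_mul_single_of_ne _ _ _ _ (by grind : x.swap ≠ q.swap),
    single_mul_single_of_ne _ _ _ _ (by grind : p.swap ≠ x), smul_zero, mul_one]
  match_scalars <;> rcases p with i | i <;> rcases q with j | j <;> rcases x with k | k <;> simp

lemma lie_single_swap_mUnit {x q : l ⊕ l} (hxq : x ≠ q) (hxq' : x ≠ q.swap) :
    ⁅(single x.swap x 1 : 𝔤), mUnit K x q⁆ = mUnit K x.swap q := by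
  rw [Ring.lie_def, mUnit, mUnit]
  simp only [add_mul, mul_add, smul_mul_assoc, mul_smul_comm, single_mul_single_same,
    single_mul_single_of_ne _ _ _ _ hxq', single_mul_single_of_ne _ _ _ _ (by grind : q ≠ x.swap),
    smul_zero, mul_one, Sum.swap_swap]
  match_scalars <;> rcases x with i | i <;> rcases q with j | j <;> simp

lemma lie_spUnit_mUnit_self {p q : l ⊕ l} (hpq' : p ≠ q.swap) :
    ⁅spUnit K q p, mUnit K p q⁆ = mUnit K q q - mUnit K p p := by
  rw [Ring.lie_def, spUnit, mUnit, mUnit, mUnit]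
  simp only [sub_mul, mul_sub, add_mul, mul_add, smul_mul_assoc, mul_smul_comm,
    single_mul_single_same, single_mul_single_of_ne _ _ _ _ hpq',
    single_mul_single_of_ne _ _ _ _ (by grind : q ≠ p.swap),
    single_mul_single_of_ne _ _ _ _ (by grind : q.swap ≠ p),
    single_mul_single_of_ne _ _ _ _ (by grind : p.swap ≠ q), smul_zero, mul_one]
  match_scalars <;> rcases p with i | i <;> rcases q with j | j <;> simp

lemma lie_spUnit_diagonal (d : l ⊕ l → K) (hd : ∀ x, d x.swap = d x) (p q : l ⊕ l) :
    ⁅spUnit K p q, diagonal d⁆ = (d q - d p) • mUnit K p q := by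
  rw [Ring.lie_def, spUnit, mUnit]
  simp only [sub_mul, mul_sub, smul_mul_assoc, mul_smul_comm, single_mul_diagonal,
    diagonal_mul_single, hd]
  match_scalars <;> ring

variable (S : LieSubalgebra K (Matrix (l ⊕ l) (l ⊕ l) K))

lemma mUnit_swap_mem {p q : l ⊕ l} (hG : mUnit K p q ∈ S) : mUnit K q.swap p.swap ∈ S :=
  mUnit_swap (K := K) p q ▸ S.smul_mem _ hG

lemma mUnit_mem_left (hS : ∀ A : 𝔤, sympAdj A = -A → A ∈ S) {p q : l ⊕ l}
    (hG : mUnit K p q ∈ S) (hpq : p ≠ q) (hpq' : p ≠ q.swap) {x : l ⊕ l} (hxq : x ≠ q)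
    (hxq' : x ≠ q.swap) : mUnit K x q ∈ S := by
  by_cases hxp : x = p
  · exact hxp ▸ hG
  by_cases hxp' : x = p.swap
  · have h := S.lie_mem (hS _ (sympAdj_single_swap p)) hG
    rwa [lie_single_swap_mUnit hpq hpq', ← hxp'] at h
  · have h := S.lie_mem (hS _ (sympAdj_spUnit x p)) hG
    rwa [lie_spUnit_mUnit_left hpq' hxp hxp' hxq hxq'] at h

lemma mUnit_mem_right (hS : ∀ A : 𝔤, sympAdj A = -A → A ∈ S) {p q : l ⊕ l}
    (hG : mUnit K p q ∈ S) (hpq : p ≠ q) (hpq' : p ≠ q.swap) {y : l ⊕ l} (hyp : y ≠ p)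
    (hyp' : y ≠ p.swap) : mUnit K p y ∈ S := by
  have h := mUnit_mem_left S hS (mUnit_swap_mem S hG) (by grind) (by grind) (x := y.swap)
    (by grind) (by grind)
  simpa using mUnit_swap_mem S h

lemma mUnit_mem (hS : ∀ A : 𝔤, sympAdj A = -A → A ∈ S) {p q : l ⊕ l}
    (hG : mUnit K p q ∈ S) (hpq : p ≠ q) (hpq' : p ≠ q.swap) {x y : l ⊕ l} (hxy : x ≠ y)
    (hxy' : x ≠ y.swap) : mUnit K x y ∈ S := by
  have key : ∀ {x y}, x ≠ y → x ≠ y.swap → x ≠ q → x ≠ q.swap → mUnit K x y ∈ S :=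
    fun hxy hxy' hxq hxq' => mUnit_mem_right S hS (mUnit_mem_left S hS hG hpq hpq' hxq hxq')
      hxq hxq' (Ne.symm hxy) (by grind)
  by_cases hxq : x ≠ q ∧ x ≠ q.swap
  · exact key hxy hxy' hxq.1 hxq.2
  · simpa using mUnit_swap_mem S
      (key (x := y.swap) (y := x.swap) (by grind) (by grind) (by grind) (by grind))

lemma mUnit_sub_mUnit_mem (hS : ∀ A : 𝔤, sympAdj A = -A → A ∈ S) {p q : l ⊕ l}
    (hG : mUnit K p q ∈ S) (hpq : p ≠ q) (hpq' : p ≠ q.swap) (x y : l ⊕ l) :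
    mUnit K y y - mUnit K x x ∈ S := by
  by_cases hxy : x = y
  · simp [hxy]
  by_cases hxy' : x = y.swap
  · simp [hxy', mUnit_swap (K := K) y y]
  have h := S.lie_mem (hS _ (sympAdj_spUnit y x)) (mUnit_mem S hS hG hpq hpq' hxy hxy')
  rwa [lie_spUnit_mUnit_self hxy'] at h

end CommRing

section Field

variable [Field K] [CharZero K]

lemma apply_swap_eq_zero {v : 𝔤} (hv : sympAdj v = v) (x : l ⊕ l) : v x x.swap = 0 := by
  have h := congrFun (congrFun hv x) x.swap
  rw [sympAdj_apply, Sum.swap_swap, ε_swap, mul_neg, ε_mul_self] at h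
  linear_combination -h / 2

variable [DecidableEq l] [Fintype l]

lemma spUnit_mul_mul_spUnit {v : 𝔤} (hv : sympAdj v = v) (x y : l ⊕ l) :
    spUnit K x y * v * spUnit K x y = v y x • mUnit K x y := by
  have hxy := congrFun (congrFun hv x.swap) y.swap
  have hx := apply_swap_eq_zero hv x.swap
  simp only [sympAdj_apply, Sum.swap_swap, ε_swap] at hxy hx
  rw [spUnit, mUnit]
  simp only [sub_mul, mul_sub, single_mul_mul_single, apply_swap_eq_zero hv, hx, ← hxy, one_mul,
    mul_one, mul_zero, zero_mul, single_zero, sub_zero, zero_sub, sub_neg_eq_add, smul_add,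
    smul_single, smul_eq_mul, neg_mul_neg]
  rcases x with i | i <;> rcases y with j | j <;> simp

/-- `F = spUnit K x y` squares to zero, so `(ad F)² v = -2 F v F`, which isolates the entry
`v y x`. -/
lemma lie_spUnit_lie_spUnit {v : 𝔤} (hv : sympAdj v = v) {x y : l ⊕ l} (hxy : x ≠ y) :
    ⁅spUnit K x y, ⁅spUnit K x y, v⁆⁆ = (-2 * v y x) • mUnit K x y := by
  have hexp : ⁅spUnit K x y, ⁅spUnit K x y, v⁆⁆ =
      spUnit K x y * spUnit K x y * v - spUnit K x y * v * spUnit K x y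
        - spUnit K x y * v * spUnit K x y + v * (spUnit K x y * spUnit K x y) := by
    simp only [Ring.lie_def]
    noncomm_ring
  rw [hexp, spUnit_mul_self hxy, spUnit_mul_mul_spUnit hv, zero_mul, mul_zero]
  module

variable (S : LieSubalgebra K (Matrix (l ⊕ l) (l ⊕ l) K))

lemma mUnit_mem_of_apply_ne_zero (hS : ∀ A : 𝔤, sympAdj A = -A → A ∈ S) {v : 𝔤} (hvS : v ∈ S)
    (hv : sympAdj v = v) {x y : l ⊕ l} (hxy : x ≠ y) (hvyx : v y x ≠ 0) : mUnit K x y ∈ S := by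
  have hF := hS _ (sympAdj_spUnit x y)
  have h := S.lie_mem hF (S.lie_mem hF hvS)
  rw [lie_spUnit_lie_spUnit hv hxy] at h
  exact (Submodule.smul_mem_iff S.toSubmodule (mul_ne_zero (by norm_num) hvyx)).1 h

lemma exists_mUnit_mem (hS : ∀ A : 𝔤, sympAdj A = -A → A ∈ S) {v : 𝔤} (hvS : v ∈ S)
    (hv : sympAdj v = v) (htr : trace v = 0) (hne : v ≠ 0) :
    ∃ p q, p ≠ q ∧ p ≠ q.swap ∧ mUnit K p q ∈ S := by
  by_cases hoff : ∃ x y, x ≠ y ∧ v y x ≠ 0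
  · obtain ⟨x, y, hxy, hvyx⟩ := hoff
    refine ⟨x, y, hxy, ?_, mUnit_mem_of_apply_ne_zero S hS hvS hv hxy hvyx⟩
    rintro rfl
    exact hvyx (apply_swap_eq_zero hv y)
  push Not at hoff
  have hdiag : diagonal v.diag = v := IsDiag.diagonal_diag fun x y h => hoff y x (Ne.symm h)
  have hd : ∀ x, v.diag x.swap = v.diag x := fun x => by
    simpa using congrFun (congrFun hv x) x
  obtain ⟨p, q, hpq⟩ : ∃ p q, v.diag p ≠ v.diag q := by
    by_contra! hconst
    have hzero : v.diag = 0 := funext fun q => by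
      have : Nonempty (l ⊕ l) := ⟨q⟩
      rw [trace, Finset.sum_congr rfl fun x _ => hconst x q, Finset.sum_const, Finset.card_univ,
        nsmul_eq_mul] at htr
      exact (mul_eq_zero.1 htr).resolve_left (Nat.cast_ne_zero.2 Fintype.card_ne_zero)
    exact hne (by rw [← hdiag, hzero]; exact diagonal_zero)
  have h := S.lie_mem (hS _ (sympAdj_spUnit p q)) hvS
  rw [← hdiag, lie_spUnit_diagonal _ hd] at h
  refine ⟨p, q, fun h => hpq (h ▸ rfl), fun h => hpq (by rw [h, hd]), ?_⟩
  exact (Submodule.smul_mem_iff S.toSubmodule (sub_ne_zero.2 (Ne.symm hpq))).1 h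

/-- `2 Z = ∑ Z x y • mUnit K x y`, and as `trace Z = 0` the diagonal terms regroup into the
differences `mUnit K x x - mUnit K x₀ x₀`. -/
lemma mem_of_sympAdj_eq_self (hS : ∀ A : 𝔤, sympAdj A = -A → A ∈ S) {p q : l ⊕ l}
    (hG : mUnit K p q ∈ S) (hpq : p ≠ q) (hpq' : p ≠ q.swap) {Z : 𝔤} (hZ : sympAdj Z = Z)
    (htr : trace Z = 0) : Z ∈ S := by
  rcases isEmpty_or_nonempty (l ⊕ l) with h | ⟨⟨x₀⟩⟩
  · simp [Subsingleton.elim Z 0]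
  have hterm : ∀ x y, mUnit K x y - (if x = y then mUnit K x₀ x₀ else 0) ∈ S := by
    intro x y
    by_cases hxy : x = y
    · simpa [hxy] using mUnit_sub_mUnit_mem S hS hG hpq hpq' x₀ y
    by_cases hxy' : x = y.swap
    · subst hxy'
      simp [hxy, mUnit_swap_self]
    · simpa [hxy] using mUnit_mem S hS hG hpq hpq' hxy hxy'
  have hsum : ∑ x, ∑ y, Z x y • (mUnit K x y - if x = y then mUnit K x₀ x₀ else 0) =
      (2 : K) • Z := by
    simp only [smul_sub, Finset.sum_sub_distrib, sum_smul_mUnit, hZ, smul_ite, smul_zero,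
      Finset.sum_ite_eq, Finset.mem_univ, if_true, ← Finset.sum_smul]
    rw [show ∑ x, Z x x = trace Z from rfl, htr, zero_smul, sub_zero, two_smul]
  have h2 : (2 : K) • Z ∈ S :=
    hsum ▸ sum_mem fun x _ => sum_mem fun y _ => S.smul_mem _ (hterm x y)
  exact (Submodule.smul_mem_iff S.toSubmodule two_ne_zero).1 h2

theorem le_sp_or_sl_le (hsp : ∀ A : 𝔤, sympAdj A = -A → A ∈ S) (hsl : ∀ A ∈ S, trace A = 0) :
    (∀ A ∈ S, sympAdj A = -A) ∨ ∀ A : 𝔤, trace A = 0 → A ∈ S := by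
  by_cases h : ∀ A ∈ S, sympAdj A = -A
  · exact Or.inl h
  right
  push Not at h
  obtain ⟨X, hXS, hX⟩ := h
  have hsp' : ∀ A, A - sympAdj A ∈ S := fun A => hsp _ (by simp)
  have hv : X + sympAdj X ∈ S := by
    rw [show X + sympAdj X = X + X - (X - sympAdj X) by abel]
    exact S.sub_mem (S.add_mem hXS hXS) (hsp' X)
  obtain ⟨p, q, hpq, hpq', hG⟩ := exists_mUnit_mem S hsp hv (by simp [add_comm])
    (by simp [trace_sympAdj, hsl X hXS]) fun h => hX (eq_neg_of_add_eq_zero_right h)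
  intro Y hY
  have hm : Y + sympAdj Y ∈ S :=
    mem_of_sympAdj_eq_self S hsp hG hpq hpq' (by simp [add_comm]) (by simp [trace_sympAdj, hY])
  have h2 := S.add_mem (hsp' Y) hm
  rw [show Y - sympAdj Y + (Y + sympAdj Y) = (2 : K) • Y by rw [two_smul]; abel] at h2
  exact (Submodule.smul_mem_iff S.toSubmodule two_ne_zero).1 h2

end Field

end SpSl

theorem no_intermediate_subalgebra_sp_sl_real_general
    (n : ℕ)
    (S : LieSubalgebra ℝ (Matrix (Fin n ⊕ Fin n) (Fin n ⊕ Fin n) ℝ))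
    (hsp : {X : Matrix (Fin n ⊕ Fin n) (Fin n ⊕ Fin n) ℝ |
        Xᵀ * stdJ n + stdJ n * X = 0} ⊆ (S : Set _))
    (hsl : (S : Set _) ⊆ {X : Matrix (Fin n ⊕ Fin n) (Fin n ⊕ Fin n) ℝ |
        X.trace = 0}) :
    (S : Set _) = {X : Matrix (Fin n ⊕ Fin n) (Fin n ⊕ Fin n) ℝ |
        Xᵀ * stdJ n + stdJ n * X = 0} ∨
    (S : Set _) = {X : Matrix (Fin n ⊕ Fin n) (Fin n ⊕ Fin n) ℝ | X.trace = 0} := by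
  have hmem (X) : Xᵀ * stdJ n + stdJ n * X = 0 ↔ SpSl.sympAdj X = -X :=
    SpSl.transpose_mul_add_mul_eq_zero_iff X
  rcases SpSl.le_sp_or_sl_le S (fun A hA => hsp ((hmem A).2 hA)) hsl with h | h
  · exact Or.inl (Set.Subset.antisymm (fun X hX => (hmem X).2 (h X hX)) hsp)
  · exact Or.inr (Set.Subset.antisymm hsl h)

/-- For `n ≥ 1`, every Lie subalgebra `S` of the Lie algebra of real
`2n × 2n` matrices (with bracket `[X, Y] = XY − YX`) satisfying
`sp(2n, ℝ) ⊆ S ⊆ sl(2n, ℝ)` is equal to `sp(2n, ℝ)` or to `sl(2n, ℝ)`: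
there is no intermediate Lie subalgebra. -/
theorem no_intermediate_subalgebra_sp_sl_real
    (n : ℕ) (hn : 1 ≤ n)
    (S : LieSubalgebra ℝ (Matrix (Fin n ⊕ Fin n) (Fin n ⊕ Fin n) ℝ))
    (hsp : {X : Matrix (Fin n ⊕ Fin n) (Fin n ⊕ Fin n) ℝ |
        Xᵀ * stdJ n + stdJ n * X = 0} ⊆ (S : Set _))
    (hsl : (S : Set _) ⊆ {X : Matrix (Fin n ⊕ Fin n) (Fin n ⊕ Fin n) ℝ |
        X.trace = 0}) :
    (S : Set _) = {X : Matrix (Fin n ⊕ Fin n) (Fin n ⊕ Fin n) ℝ |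
        Xᵀ * stdJ n + stdJ n * X = 0} ∨
    (S : Set _) = {X : Matrix (Fin n ⊕ Fin n) (Fin n ⊕ Fin n) ℝ | X.trace = 0} :=
  no_intermediate_subalgebra_sp_sl_real_general n S hsp hsl
end

section
/- Let m ≥ 3. Let 𝔥 ⊂ so(m+1,ℂ) be the subalgebra consisting of those skew-symmetric (m+1)×(m+1) complex matrices whose last row and last column vanish (a copy of so(m,ℂ)). Then every complex Lie subalgebra S with 𝔥 ⊆ S ⊆ so(m+1,ℂ) is equal to 𝔥 or to so(m+1,ℂ); in other words, there is no intermediate Lie subalgebra so(m,ℂ) ⊊ S ⊊ so(m+1,ℂ). -/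
/-!
Write `so(n) = 𝔥 ⊕ V`, where `𝔥` is the stabilizer of the basis vector `eₚ` and
`V = {c ∧ eₚ}`. Bracketing with `𝔥` acts on `V` as `so(n - 1)` on its standard representation:
`⁅e_i ∧ e_j, c ∧ eₚ⁆ = c_j • e_i ∧ eₚ - c_i • e_j ∧ eₚ`. If `S ⊋ 𝔥`, then subtracting the
`𝔥`-component of an element of `S \ 𝔥` leaves some `c ∧ eₚ ∈ S` with `c_k ≠ 0`. For `a, b, k`
distinct and different from `p` (this needs `n ≥ 4`), bracketing first with `e_b ∧ e_k` and then
with `e_a ∧ e_b` isolates `c_k • e_a ∧ eₚ`; one more bracket reaches every `e_l ∧ eₚ`, so `V ⊆ S`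
and `S = so(n)`.
-/

open Matrix

attribute [local instance] LieRing.ofAssociativeRing

open LieAlgebra.Orthogonal

theorem Matrix.apply_self_eq_zero_of_transpose_eq_neg {n K : Type*} [AddGroup K]
    [IsAddTorsionFree K] {A : Matrix n n K} (hA : Aᵀ = -A) (i : n) : A i i = 0 :=
  self_eq_neg.1 (congrFun (congrFun hA i) i)

theorem Fintype.exists_pair_ne_of_four_le_card {α : Type*} [Fintype α] [DecidableEq α]
    (h : 4 ≤ Fintype.card α) (p k : α) : ∃ a b, a ≠ b ∧ a ≠ k ∧ b ≠ k ∧ a ≠ p ∧ b ≠ p := by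
  have hcard : 1 < ((Finset.univ.erase p).erase k).card := by
    have h₁ := Finset.pred_card_le_card_erase (s := Finset.univ) (a := p)
    have h₂ := Finset.pred_card_le_card_erase (s := Finset.univ.erase p) (a := k)
    rw [Finset.card_univ] at h₁
    omega
  obtain ⟨a, ha, b, hb, hab⟩ := Finset.one_lt_card.1 hcard
  simp only [Finset.mem_erase, Finset.mem_univ, and_true] at ha hb
  exact ⟨a, b, hab, ha.1, hb.1, ha.2, hb.2⟩

namespace Matrix

variable {n K : Type*} [DecidableEq n]

section CommRing

variable [CommRing K]

def skewSingle (i j : n) : Matrix n n K := single i j 1 - single j i 1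

@[simp]
theorem skewSingle_self (i : n) : (skewSingle i i : Matrix n n K) = 0 := sub_self _

theorem skewSingle_apply (i j a b : n) :
    (skewSingle i j : Matrix n n K) a b =
      (if i = a ∧ j = b then 1 else 0) - (if j = a ∧ i = b then 1 else 0) := by
  simp only [skewSingle, sub_apply, single_apply]

theorem transpose_skewSingle (i j : n) :
    (skewSingle i j : Matrix n n K)ᵀ = -skewSingle i j := by
  rw [skewSingle, transpose_sub, transpose_single, transpose_single, neg_sub]

def soStabilizer (p : n) : Set (Matrix n n K) :=
  {A | Aᵀ = -A ∧ ∀ i, A i p = 0 ∧ A p i = 0}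

theorem skewSingle_mem_soStabilizer {i j p : n} (hi : i ≠ p) (hj : j ≠ p) :
    skewSingle i j ∈ (soStabilizer p : Set (Matrix n n K)) :=
  ⟨transpose_skewSingle i j, fun a => by simp [skewSingle_apply, hi, hj]⟩

variable [Fintype n]

theorem lie_skewSingle_skewSingle {i j p : n} (hi : i ≠ p) (hj : j ≠ p) (k : n) :
    ⁅(skewSingle i j : Matrix n n K), skewSingle k p⁆ =
      (if j = k then (skewSingle i p : Matrix n n K) else 0) -
        (if i = k then skewSingle j p else 0) := by
  rw [Ring.lie_def]
  unfold skewSingle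
  split_ifs <;> subst_vars <;>
    simp [sub_mul, mul_sub, single_mul_single_same, single_mul_single_of_ne, *, Ne.symm,
      neg_add_eq_sub]

/-- The matrix of `c ∧ eₚ`. -/
def wedgeSingle (c : n → K) (p : n) : Matrix n n K := ∑ k, c k • skewSingle k p

theorem wedgeSingle_apply (c : n → K) (p i j : n) :
    wedgeSingle c p i j = (if j = p then c i else 0) - (if i = p then c j else 0) := by
  simp only [wedgeSingle, sum_apply, smul_apply, skewSingle_apply, smul_eq_mul, mul_sub,
    Finset.sum_sub_distrib, mul_ite, mul_one, mul_zero, ite_and]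
  simp [eq_comm]

theorem transpose_wedgeSingle (c : n → K) (p : n) :
    (wedgeSingle c p)ᵀ = -wedgeSingle c p := by
  simp only [wedgeSingle, transpose_sum, transpose_smul, transpose_skewSingle, smul_neg,
    Finset.sum_neg_distrib]

theorem lie_skewSingle_wedgeSingle {i j p : n} (hi : i ≠ p) (hj : j ≠ p) (c : n → K) :
    ⁅(skewSingle i j : Matrix n n K), wedgeSingle c p⁆ =
      c j • skewSingle i p - c i • skewSingle j p := by
  simp only [wedgeSingle, lie_sum, lie_smul, lie_skewSingle_skewSingle hi hj, smul_sub, smul_ite,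
    smul_zero, Finset.sum_sub_distrib, Finset.sum_ite_eq, Finset.mem_univ, if_true]

theorem sub_wedgeSingle_mem_soStabilizer [IsAddTorsionFree K] {A : Matrix n n K}
    (hA : Aᵀ = -A) (p : n) : A - wedgeSingle (fun i => A i p) p ∈ soStabilizer p := by
  have hskew (i j : n) : A j i = -A i j := congrFun (congrFun hA i) j
  refine ⟨?_, fun i => ⟨?_, ?_⟩⟩
  · rw [transpose_sub, hA, transpose_wedgeSingle, neg_sub_neg, neg_sub]
  · by_cases hi : i = p <;>
      simp [wedgeSingle_apply, hi, apply_self_eq_zero_of_transpose_eq_neg hA]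
  · rw [sub_apply, wedgeSingle_apply, if_pos rfl, hskew i p]
    split_ifs with hi
    · simp [hi, apply_self_eq_zero_of_transpose_eq_neg hA]
    · ring

variable {p : n} {S : LieSubalgebra K (Matrix n n K)}

theorem exists_wedgeSingle_mem [IsAddTorsionFree K]
    (hlow : soStabilizer p ⊆ (S : Set (Matrix n n K))) (hup : S ≤ so n K)
    (hS : ¬(S : Set (Matrix n n K)) ⊆ soStabilizer p) :
    ∃ (c : n → K) (k : n), k ≠ p ∧ c k ≠ 0 ∧ wedgeSingle c p ∈ S := by
  obtain ⟨A, hAS, hA⟩ := Set.not_subset.1 hS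
  have hskew : Aᵀ = -A := (mem_so n K A).1 (hup hAS)
  obtain ⟨k, hk⟩ : ∃ k, A k p ≠ 0 := by
    by_contra! h
    exact hA ⟨hskew, fun i => ⟨h i, by simpa [h i] using congrFun (congrFun hskew i) p⟩⟩
  refine ⟨fun i => A i p, k, ?_, hk, ?_⟩
  · rintro rfl
    exact hk (apply_self_eq_zero_of_transpose_eq_neg hskew k)
  · simpa using S.sub_mem hAS (hlow (sub_wedgeSingle_mem_soStabilizer hskew p))

theorem skewSingle_mem_of_skewSingle_mem (hlow : soStabilizer p ⊆ (S : Set (Matrix n n K)))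
    {a : n} (hap : a ≠ p) (ha : skewSingle a p ∈ S) (l : n) : skewSingle l p ∈ S := by
  rcases eq_or_ne l p with rfl | hlp
  · simp
  rcases eq_or_ne l a with rfl | hla
  · exact ha
  have h := lie_skewSingle_skewSingle (K := K) hlp hap a
  rw [if_pos rfl, if_neg hla, sub_zero] at h
  exact h ▸ S.lie_mem (hlow (skewSingle_mem_soStabilizer hlp hap)) ha

theorem so_le_of_skewSingle_mem [IsAddTorsionFree K]
    (hlow : soStabilizer p ⊆ (S : Set (Matrix n n K))) (h : ∀ l, skewSingle l p ∈ S) :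
    so n K ≤ S := by
  intro A hA
  have hw : wedgeSingle (fun i => A i p) p ∈ S := sum_mem fun k _ => S.smul_mem _ (h k)
  simpa using S.add_mem (hlow (sub_wedgeSingle_mem_soStabilizer ((mem_so n K A).1 hA) p)) hw

end CommRing

section Field

variable [Field K] [Fintype n] {p : n} {S : LieSubalgebra K (Matrix n n K)}

theorem skewSingle_mem_of_wedgeSingle_mem (hlow : soStabilizer p ⊆ (S : Set (Matrix n n K)))
    {c : n → K} (hc : wedgeSingle c p ∈ S) {a b k : n} (hab : a ≠ b) (hak : a ≠ k)
    (hbk : b ≠ k) (hap : a ≠ p) (hbp : b ≠ p) (hkp : k ≠ p) (hck : c k ≠ 0) :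
    skewSingle a p ∈ S := by
  have h₁ : c k • skewSingle b p - c b • skewSingle k p ∈ S := by
    rw [← lie_skewSingle_wedgeSingle hbp hkp]
    exact S.lie_mem (hlow (skewSingle_mem_soStabilizer hbp hkp)) hc
  have h₂ : ⁅(skewSingle a b : Matrix n n K),
      (c k • skewSingle b p - c b • skewSingle k p : Matrix n n K)⁆ = c k • skewSingle a p := by
    rw [lie_sub, lie_smul, lie_smul, lie_skewSingle_skewSingle hap hbp,
      lie_skewSingle_skewSingle hap hbp, if_pos rfl, if_neg hab, if_neg hbk, if_neg hak]
    simp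
  have h₃ : c k • skewSingle a p ∈ S :=
    h₂ ▸ S.lie_mem (hlow (skewSingle_mem_soStabilizer hap hbp)) h₁
  simpa [hck] using S.smul_mem (c k)⁻¹ h₃

theorem eq_soStabilizer_or_eq_so [CharZero K] (hn : 4 ≤ Fintype.card n)
    (hlow : soStabilizer p ⊆ (S : Set (Matrix n n K))) (hup : S ≤ so n K) :
    (S : Set (Matrix n n K)) = soStabilizer p ∨ S = so n K := by
  by_cases hS : (S : Set (Matrix n n K)) ⊆ soStabilizer p
  · exact .inl (hS.antisymm hlow)
  obtain ⟨c, k, hkp, hck, hc⟩ := exists_wedgeSingle_mem hlow hup hS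
  obtain ⟨a, b, hab, hak, hbk, hap, hbp⟩ := Fintype.exists_pair_ne_of_four_le_card hn p k
  have ha := skewSingle_mem_of_wedgeSingle_mem hlow hc hab hak hbk hap hbp hkp hck
  exact .inr <| hup.antisymm <|
    so_le_of_skewSingle_mem hlow (skewSingle_mem_of_skewSingle_mem hlow hap ha)

end Field

end Matrix

/-- Let `m ≥ 3`.  Let `𝔥 ⊂ so(m+1, ℂ)` be the subalgebra of
skew-symmetric `(m+1) × (m+1)` complex matrices whose last row and last column
vanish (a copy of `so(m, ℂ)`).  Then every complex Lie subalgebra `S` with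
`𝔥 ⊆ S ⊆ so(m+1, ℂ)` equals `𝔥` or `so(m+1, ℂ)`: there is no intermediate
Lie subalgebra `so(m, ℂ) ⊊ S ⊊ so(m+1, ℂ)`. -/
theorem no_intermediate_subalgebra_so_so_complex
    (m : ℕ) (hm : 3 ≤ m)
    (S : LieSubalgebra ℂ (Matrix (Fin (m + 1)) (Fin (m + 1)) ℂ))
    (hlow : {A : Matrix (Fin (m + 1)) (Fin (m + 1)) ℂ |
        Aᵀ = -A ∧ ∀ i, A i (Fin.last m) = 0 ∧ A (Fin.last m) i = 0} ⊆ (S : Set _))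
    (hup : (S : Set _) ⊆ {A : Matrix (Fin (m + 1)) (Fin (m + 1)) ℂ | Aᵀ = -A}) :
    (S : Set _) = {A : Matrix (Fin (m + 1)) (Fin (m + 1)) ℂ |
        Aᵀ = -A ∧ ∀ i, A i (Fin.last m) = 0 ∧ A (Fin.last m) i = 0} ∨
    (S : Set _) = {A : Matrix (Fin (m + 1)) (Fin (m + 1)) ℂ | Aᵀ = -A} := by
  have hso : (so (Fin (m + 1)) ℂ : Set (Matrix (Fin (m + 1)) (Fin (m + 1)) ℂ)) =
      {A | Aᵀ = -A} := Set.ext (mem_so _ ℂ)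
  have hcard : 4 ≤ Fintype.card (Fin (m + 1)) := by simpa using hm
  rcases Matrix.eq_soStabilizer_or_eq_so (p := Fin.last m) hcard hlow
    (fun A hA => (mem_so _ ℂ A).2 (hup hA)) with h | h
  · exact .inl h
  · exact .inr (hso ▸ congrArg SetLike.coe h)
end

section
/- Let p ≥ 1 and q ≥ 0 be integers with (p−1) + q ≥ 3. Set D = diag(1,…,1,−1,…,−1) (p entries equal to 1 followed by q entries equal to −1) and let so(p,q) = {X real (p+q)×(p+q) matrix : Xᵀ D + D X = 0}. Let 𝔥 ⊂ so(p,q) be the subalgebra of matrices whose first row and first column vanish (a copy of so(p−1,q)). Then every Lie subalgebra S with 𝔥 ⊆ S ⊆ so(p,q) equals 𝔥 or so(p,q); in other words, there is no intermediate Lie subalgebra so(p−1,q) ⊊ S ⊊ so(p,q). -/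
/-!
Write `so ε` for the matrices skew-adjoint for the form `diagonal ε` with `ε i = ±1`, and fix an
index `z`. Every `X ∈ so ε` is `H + rowColumn ε z v`, where `H ∈ soFix ε z` has vanishing `z`-th
row and column and `v` is the `z`-th row of `X`. Bracketing with `H ∈ soFix ε z` acts on the
complement as on row vectors: `⁅H, rowColumn ε z v⁆ = rowColumn ε z (-(v ᵥ* H))`.
If `S ⊋ soFix ε z`, then `S` contains some `rowColumn ε z v` with `v ≠ 0`. Two brackets with
elementary skew matrices `E_ik - ε_i ε_k E_ki` supported away from `z` cut `v` down to a single
nonzero coordinate (this needs two indices besides `z` and one in the support of `v`), and one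
more bracket moves that coordinate anywhere; so `S` contains every `rowColumn ε z v`, hence all
of `so ε`.
-/

open Matrix

attribute [local instance 100] LieRing.ofAssociativeRing

/-- The Gram matrix `D = diag(1,…,1,−1,…,−1)` (`p` ones followed by `q` minus-ones)
of the standard quadratic form of signature `(p, q)` on `ℝ^{p+q}`. -/
def gramPQ (p q : ℕ) : Matrix (Fin (p + q)) (Fin (p + q)) ℝ :=
  Matrix.diagonal fun i => if (i : ℕ) < p then 1 else -1

namespace DiagonalOrthogonal

variable {ι : Type*} [DecidableEq ι] {ε : ι → ℝ}

def rowColumn (ε : ι → ℝ) (z : ι) : (ι → ℝ) →ₗ[ℝ] Matrix ι ι ℝ where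
  toFun v := of fun k l => (if k = z then v l else 0) - (if l = z then ε z * ε k * v k else 0)
  map_add' u v := by
    ext k l; simp only [of_apply, Pi.add_apply, Matrix.add_apply]; split_ifs <;> ring
  map_smul' c v := by
    ext k l
    simp only [of_apply, Pi.smul_apply, Matrix.smul_apply, smul_eq_mul, RingHom.id_apply]
    split_ifs <;> ring

@[simp]
theorem rowColumn_apply (z : ι) (v : ι → ℝ) (k l : ι) :
    rowColumn ε z v k l =
      (if k = z then v l else 0) - (if l = z then ε z * ε k * v k else 0) := rfl

theorem rowColumn_single_self (hε : ∀ i, ε i * ε i = 1) (z : ι) (a : ℝ) :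
    rowColumn ε z (Pi.single z a) = 0 := by
  ext k l
  by_cases hk : k = z <;> by_cases hl : l = z <;> simp [hk, hl, hε]

def elemSkew (ε : ι → ℝ) (i j : ι) : Matrix ι ι ℝ :=
  single i j 1 - (ε i * ε j) • single j i 1

variable [Fintype ι]

def so (ε : ι → ℝ) : Set (Matrix ι ι ℝ) := {X | Xᵀ * diagonal ε + diagonal ε * X = 0}

def soFix (ε : ι → ℝ) (z : ι) : Set (Matrix ι ι ℝ) :=
  {X | X ∈ so ε ∧ ∀ i j, (i = z ∨ j = z) → X i j = 0}

theorem mem_so_iff {X : Matrix ι ι ℝ} :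
    X ∈ so ε ↔ ∀ i j, X j i * ε j + ε i * X i j = 0 := by
  simp [so, ← Matrix.ext_iff, mul_diagonal, diagonal_mul]

section

variable (hε : ∀ i, ε i * ε i = 1)
include hε

theorem apply_eq_neg_of_mem_so {X : Matrix ι ι ℝ} (hX : X ∈ so ε) (i j : ι) :
    X i j = -(ε i * ε j * X j i) := by
  linear_combination ε i * mem_so_iff.mp hX i j - X i j * hε i

theorem apply_self_eq_zero_of_mem_so {X : Matrix ι ι ℝ} (hX : X ∈ so ε) (i : ι) :
    X i i = 0 := by
  linear_combination ε i / 2 * mem_so_iff.mp hX i i - X i i * hε i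

theorem rowColumn_mem_so (z : ι) (v : ι → ℝ) : rowColumn ε z v ∈ so ε := by
  refine mem_so_iff.mpr fun i j => ?_
  by_cases hi : i = z <;> by_cases hj : j = z <;>
    simp only [rowColumn_apply, hi, hj, if_true, if_false]
  · linear_combination (-2 * ε z * v z) * hε z
  · linear_combination (-ε z * v j) * hε j
  · linear_combination (-ε z * v i) * hε i
  · ring

theorem sub_rowColumn_mem_soFix {X : Matrix ι ι ℝ} (hX : X ∈ so ε) (z : ι) :
    X - rowColumn ε z (X z) ∈ soFix ε z := by
  refine ⟨mem_so_iff.mpr fun i j => ?_, ?_⟩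
  · simp only [Matrix.sub_apply]
    linear_combination mem_so_iff.mp hX i j - mem_so_iff.mp (rowColumn_mem_so hε z (X z)) i j
  · rintro i j (rfl | rfl)
    · by_cases hj : j = i <;> simp [hj, apply_self_eq_zero_of_mem_so hε hX]
    · by_cases hi : i = j
      · subst hi; simp [apply_self_eq_zero_of_mem_so hε hX]
      · simp only [Matrix.sub_apply, apply_eq_neg_of_mem_so hε hX i j, rowColumn_apply, hi,
          ↓reduceIte, zero_sub, sub_neg_eq_add]
        ring

theorem lie_rowColumn {H : Matrix ι ι ℝ} {z : ι} (hH : H ∈ soFix ε z) (v : ι → ℝ) :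
    ⁅H, rowColumn ε z v⁆ = rowColumn ε z (-(v ᵥ* H)) := by
  obtain ⟨hso, hzero⟩ := hH
  rw [Ring.lie_def]
  ext k l
  simp only [Matrix.sub_apply, mul_apply, rowColumn_apply, vecMul, dotProduct, Pi.neg_apply]
  by_cases hk : k = z <;> by_cases hl : l = z
  · simp [hk, hl, hzero]
  · simp [hk, hl, hzero, sub_mul, Finset.sum_sub_distrib, ite_mul]
  · simp only [hk, hl, ↓reduceIte, mul_sub, mul_ite, mul_zero, Finset.sum_sub_distrib,
      Finset.sum_ite_eq', Finset.mem_univ, or_true, hzero, zero_mul, zero_sub,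
      Finset.sum_const_zero, sub_zero, mul_neg, sub_neg_eq_add, zero_add]
    rw [Finset.mul_sum, ← Finset.sum_neg_distrib]
    refine Finset.sum_congr rfl fun m _ => ?_
    rw [apply_eq_neg_of_mem_so hε hso k m]
    linear_combination ε k * ε z * H m k * v m * hε m
  · simp [hk, hl, hzero]

theorem elemSkew_mem_soFix {i j z : ι} (hij : i ≠ j) (hi : i ≠ z) (hj : j ≠ z) :
    elemSkew ε i j ∈ soFix ε z := by
  refine ⟨mem_so_iff.mpr fun k l => ?_, ?_⟩
  · simp only [elemSkew, Matrix.sub_apply, Matrix.smul_apply, single_apply, smul_eq_mul]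
    rcases eq_or_ne k i with rfl | hki
    · rcases eq_or_ne l j with rfl | hlj
      · simp only [hij, hij.symm, and_self, ↓reduceIte, mul_one, zero_sub, neg_mul, mul_zero,
          sub_zero]
        linear_combination (-ε k) * hε l
      · simp [hij.symm, hlj.symm]
    · rcases eq_or_ne k j with rfl | hkj
      · rcases eq_or_ne l i with rfl | hli
        · simp only [and_self, ↓reduceIte, hij.symm, hij, mul_zero, sub_zero, one_mul, mul_one,
            zero_sub, mul_neg]
          linear_combination (-ε l) * hε k
        · simp [hki.symm, hli.symm]
      · simp [hki.symm, hkj.symm]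
  · rintro k l (rfl | rfl) <;> simp [elemSkew, hi, hj]

theorem lie_elemSkew_rowColumn {i j z : ι} (hij : i ≠ j) (hi : i ≠ z) (hj : j ≠ z)
    (v : ι → ℝ) :
    ⁅elemSkew ε i j, rowColumn ε z v⁆ =
      rowColumn ε z (Pi.single i (ε i * ε j * v j) - Pi.single j (v i)) := by
  rw [lie_rowColumn hε (elemSkew_mem_soFix hε hij hi hj)]
  congr 1
  ext l
  simp only [elemSkew, vecMul, dotProduct, Matrix.sub_apply, Matrix.smul_apply, single_apply,
    smul_eq_mul, mul_sub, mul_ite, ite_and, mul_one, mul_zero, Finset.sum_sub_distrib,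
    Finset.sum_ite_eq, Finset.mem_univ, if_true, Pi.neg_apply, Pi.sub_apply, Pi.single_apply]
  split_ifs <;> subst_vars <;> simp_all [mul_comm]

section

variable {z : ι} {S : LieSubalgebra ℝ (Matrix ι ι ℝ)} (hS : soFix ε z ⊆ S)
include hS

theorem rowColumn_single_sub_single_mem {v : ι → ℝ} (hv : rowColumn ε z v ∈ S) {i j : ι}
    (hij : i ≠ j) (hi : i ≠ z) (hj : j ≠ z) :
    rowColumn ε z (Pi.single i (ε i * ε j * v j) - Pi.single j (v i)) ∈ S := by
  rw [← lie_elemSkew_rowColumn hε hij hi hj]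
  exact S.lie_mem (hS (elemSkew_mem_soFix hε hij hi hj)) hv

theorem rowColumn_single_mem {v : ι → ℝ} (hv : rowColumn ε z v ∈ S) {i j k : ι}
    (hij : i ≠ j) (hki : k ≠ i) (hkj : k ≠ j) (hi : i ≠ z) (hj : j ≠ z) (hk : k ≠ z) :
    rowColumn ε z (Pi.single k (ε k * ε j * v j)) ∈ S := by
  have h := rowColumn_single_sub_single_mem hε hS
    (rowColumn_single_sub_single_mem hε hS hv hij hi hj) hki hk hi
  convert h using 2
  ext l
  by_cases hl : l = k
  · simp only [hl, Pi.single_eq_same, Pi.sub_apply, ne_eq, hij, not_false_eq_true,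
      Pi.single_eq_of_ne, sub_zero, hki, hkj, sub_self, Pi.single_zero, Pi.zero_apply]
    linear_combination (-ε k * ε j * v j) * hε i
  · simp [hl, hki, hkj]

theorem rowColumn_mem_of_single_mem {k : ι} (hk : k ≠ z) {c : ℝ} (hc : c ≠ 0)
    (h : rowColumn ε z (Pi.single k c) ∈ S) (v : ι → ℝ) : rowColumn ε z v ∈ S := by
  have hsingle_k (a : ℝ) : rowColumn ε z (Pi.single k a) ∈ S := by
    have := S.smul_mem (a / c) h
    rwa [← map_smul, ← Pi.single_smul, smul_eq_mul, div_mul_cancel₀ a hc] at this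
  have hsingle (m : ι) (a : ℝ) : rowColumn ε z (Pi.single m a) ∈ S := by
    by_cases hmz : m = z
    · rw [hmz, rowColumn_single_self hε]
      exact S.zero_mem
    by_cases hmk : m = k
    · exact hmk ▸ hsingle_k a
    have h := rowColumn_single_sub_single_mem hε hS (hsingle_k (ε m * ε k * a)) hmk hmz hk
    have hsign : ε m * ε k * (ε m * ε k * a) = a := by
      linear_combination a * ε k * ε k * hε m + a * hε k
    rwa [Pi.single_eq_same, Pi.single_eq_of_ne hmk, Pi.single_zero, sub_zero, hsign] at h
  rw [← Finset.univ_sum_single v, map_sum]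
  exact S.sum_mem fun m _ => hsingle m (v m)

theorem rowColumn_mem_of_apply_ne_zero (hcard : 4 ≤ Fintype.card ι) {v : ι → ℝ}
    (hv : rowColumn ε z v ∈ S) {j : ι} (hj : j ≠ z) (hvj : v j ≠ 0) (w : ι → ℝ) :
    rowColumn ε z w ∈ S := by
  have hcompl : 1 < ({z, j}ᶜ : Finset ι).card := by
    rw [Finset.card_compl]
    have := Finset.card_le_two (a := z) (b := j)
    omega
  obtain ⟨i, hi, k, hk, hki⟩ := Finset.one_lt_card.mp hcompl
  simp only [Finset.mem_compl, Finset.mem_insert, Finset.mem_singleton, not_or] at hi hk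
  have hc : ε k * ε j * v j ≠ 0 :=
    mul_ne_zero (mul_ne_zero (left_ne_zero_of_mul_eq_one (hε k))
      (left_ne_zero_of_mul_eq_one (hε j))) hvj
  exact rowColumn_mem_of_single_mem hε hS hk.1 hc
    (rowColumn_single_mem hε hS hv hi.2 (Ne.symm hki) hk.2 hi.1 hj hk.1) w

end

theorem eq_soFix_or_eq_so (hcard : 4 ≤ Fintype.card ι) {z : ι}
    {S : LieSubalgebra ℝ (Matrix ι ι ℝ)} (hlow : soFix ε z ⊆ S)
    (hup : (S : Set (Matrix ι ι ℝ)) ⊆ so ε) :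
    (S : Set (Matrix ι ι ℝ)) = soFix ε z ∨ (S : Set (Matrix ι ι ℝ)) = so ε := by
  by_cases hfix : (S : Set (Matrix ι ι ℝ)) ⊆ soFix ε z
  · exact Or.inl (hfix.antisymm hlow)
  right
  obtain ⟨X, hXS, hX⟩ := Set.not_subset.mp hfix
  have hrow : X z ≠ 0 := fun h0 =>
    hX (by simpa [h0] using sub_rowColumn_mem_soFix hε (hup hXS) z)
  obtain ⟨j, hj⟩ := Function.ne_iff.mp hrow
  have hjz : j ≠ z := by
    rintro rfl
    exact hj (apply_self_eq_zero_of_mem_so hε (hup hXS) j)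
  have hXrow : rowColumn ε z (X z) ∈ S := by
    simpa using S.sub_mem hXS (hlow (sub_rowColumn_mem_soFix hε (hup hXS) z))
  refine hup.antisymm fun Y hY => ?_
  simpa using S.add_mem (hlow (sub_rowColumn_mem_soFix hε hY z))
    (rowColumn_mem_of_apply_ne_zero hε hlow hcard hXrow hjz hj (Y z))

end

end DiagonalOrthogonal

/-- Let `p ≥ 1`, `q ≥ 0` with `(p−1) + q ≥ 3`, and let
`so(p, q) = {X : Xᵀ D + D X = 0}` for `D = diag(1,…,1,−1,…,−1)`.  Let
`𝔥 ⊂ so(p, q)` be the subalgebra of matrices whose first row and first column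
vanish (a copy of `so(p−1, q)`).  Then every Lie subalgebra `S` with
`𝔥 ⊆ S ⊆ so(p, q)` equals `𝔥` or `so(p, q)`: there is no intermediate Lie
subalgebra `so(p−1, q) ⊊ S ⊊ so(p, q)`. -/
theorem no_intermediate_subalgebra_so_so_real
    (p q : ℕ) (hp : 1 ≤ p) (hpq : 3 ≤ (p - 1) + q)
    (S : LieSubalgebra ℝ (Matrix (Fin (p + q)) (Fin (p + q)) ℝ))
    (hlow : {X : Matrix (Fin (p + q)) (Fin (p + q)) ℝ |
        Xᵀ * gramPQ p q + gramPQ p q * X = 0 ∧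
          ∀ i j : Fin (p + q), ((i : ℕ) = 0 ∨ (j : ℕ) = 0) → X i j = 0} ⊆ (S : Set _))
    (hup : (S : Set _) ⊆ {X : Matrix (Fin (p + q)) (Fin (p + q)) ℝ |
        Xᵀ * gramPQ p q + gramPQ p q * X = 0}) :
    (S : Set _) = {X : Matrix (Fin (p + q)) (Fin (p + q)) ℝ |
        Xᵀ * gramPQ p q + gramPQ p q * X = 0 ∧
          ∀ i j : Fin (p + q), ((i : ℕ) = 0 ∨ (j : ℕ) = 0) → X i j = 0} ∨
    (S : Set _) = {X : Matrix (Fin (p + q)) (Fin (p + q)) ℝ |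
        Xᵀ * gramPQ p q + gramPQ p q * X = 0} := by
  let ε : Fin (p + q) → ℝ := fun i => if (i : ℕ) < p then 1 else -1
  let z : Fin (p + q) := ⟨0, by omega⟩
  have hε (i : Fin (p + q)) : ε i * ε i = 1 := by dsimp only [ε]; split_ifs <;> norm_num
  have hfix : {X : Matrix (Fin (p + q)) (Fin (p + q)) ℝ |
      Xᵀ * gramPQ p q + gramPQ p q * X = 0 ∧
        ∀ i j : Fin (p + q), ((i : ℕ) = 0 ∨ (j : ℕ) = 0) → X i j = 0} =
      DiagonalOrthogonal.soFix ε z := by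
    simp only [DiagonalOrthogonal.soFix, DiagonalOrthogonal.so, z, Fin.ext_iff]
    rfl
  rw [hfix] at hlow ⊢
  exact DiagonalOrthogonal.eq_soFix_or_eq_so hε (by rw [Fintype.card_fin]; omega) hlow hup
end

section
/- Let n ≥ 1 and let p be an integer with 0 < 2p < 2n. Let ω be an alternating 2p-multilinear real-valued form on ℝ^{2n} such that for every g ∈ SL(2n,ℝ), the linear complex structure J = g J₀ g⁻¹ (where J₀ = [[0,I],[−I,0]] in n×n block form) satisfies ω(J v₁, …, J v_{2p}) = ω(v₁, …, v_{2p}) for all v₁, …, v_{2p} ∈ ℝ^{2n}. Then ω = 0. -/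
/-!
Invariance of `ω` under every `g J₀ g⁻¹` says that every translate `ω ∘ g`, `g ∈ SL(2n, ℝ)`, is
`J₀`-invariant. On standard basis vectors, `J₀ e_z = ± e_{zᵗ}`, where `ᵗ` exchanges the two blocks
of coordinates, and `diag d` rescales `e_z` by `d z`; so `J₀`-invariance of `ω ∘ diag d` reads
`± (∏ᵢ d (f i)ᵗ) ω(e_{fᵗ}) = (∏ᵢ d (f i)) ω(e_f)` for every tuple `f` of indices.
If `f` is injective and some `(f i₀)ᵗ` is not among the `f i`, the two products can be varied
independently (put `2⁻¹` at `f i₀` and `2` at `(f i₀)ᵗ`), which forces `ω(e_f) = 0`. Since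
`2p < 2n`, a signed transposition in `SL(2n, ℝ)` carries any injective `f` to one of this kind.
-/

open Matrix

/-- The standard linear complex structure `J₀ = [[0, I], [−I, 0]]` (in `n × n`
block form) on `ℝ^{2n}`. -/
def stdJR (n : ℕ) : Matrix (Fin n ⊕ Fin n) (Fin n ⊕ Fin n) ℝ :=
  Matrix.fromBlocks 0 1 (-1) 0

open Function

section General

variable {R ι κ : Type*} [CommRing R] [Fintype ι] [DecidableEq ι]

theorem AlternatingMap.compLinearMap_toLin'_apply_single {N : Type*} [AddCommGroup N]
    [Module R N] [Fintype κ] (ω : (ι → R) [⋀^κ]→ₗ[R] N) {A : Matrix ι ι R} {a : ι → R}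
    {τ : ι → ι} (hA : ∀ z, A *ᵥ Pi.single z 1 = a z • Pi.single (τ z) 1) (f : κ → ι) :
    ω.compLinearMap (toLin' A) (fun i => Pi.single (f i) 1) =
      (∏ i, a (f i)) • ω (fun i => Pi.single (τ (f i)) 1) := by
  simp only [AlternatingMap.compLinearMap_apply, toLin'_apply, hA]
  exact ω.map_smul_univ _ _

theorem det_diagonal_mulSingle_sign_mul_permMatrix (σ : Equiv.Perm ι) (a : ι) :
    (diagonal (Pi.mulSingle a (Equiv.Perm.sign σ : R)) * σ.permMatrix R).det = 1 := by
  rw [det_mul, det_diagonal, Finset.prod_pi_mulSingle', if_pos (Finset.mem_univ a),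
    det_permutation, ← Int.cast_mul, ← Units.val_mul, Int.units_mul_self, Units.val_one,
    Int.cast_one]

theorem diagonal_mulSingle_mul_permMatrix_mulVec_single (σ : Equiv.Perm ι) {a z : ι} (c : R)
    (hz : z ≠ a) :
    (diagonal (Pi.mulSingle a c) * σ.permMatrix R) *ᵥ Pi.single (σ z) 1 = Pi.single z 1 := by
  rw [← mulVec_mulVec, permMatrix_mulVec, Pi.single_comp_equiv, Equiv.symm_apply_apply,
    diagonal_mulVec_single, Pi.mulSingle_eq_of_ne hz, one_mul]

omit [Fintype ι] in
theorem Fintype.prod_pi_mulSingle_comp {M : Type*} [Fintype κ] [CommMonoid M] {f : κ → ι}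
    (hf : Injective f) (a : ι) (x : M) :
    ∏ i, (Pi.mulSingle a x : ι → M) (f i) = if a ∈ Set.range f then x else 1 := by
  rw [← Finset.prod_image fun i _ j _ h => hf h, Finset.prod_pi_mulSingle']
  simp

omit [Fintype ι] in
theorem exists_perm_apply_notMem_range_comp (τ : ι → ι) {f : κ → ι} {w : ι}
    (hw : w ∉ Set.range f) {i₀ : κ} (hi₀ : τ (f i₀) ≠ f i₀) :
    ∃ σ : Equiv.Perm ι, τ (σ (f i₀)) ∉ Set.range (σ ∘ f) := by
  refine ⟨Equiv.swap (τ (f i₀)) w, ?_⟩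
  rintro ⟨j, hj⟩
  rw [Function.comp_apply, Equiv.swap_apply_of_ne_of_ne hi₀.symm fun h => hw ⟨i₀, h⟩,
    Equiv.swap_apply_eq_iff, Equiv.swap_apply_left] at hj
  exact hw ⟨j, hj⟩

end General

section StdJR

variable {n : ℕ} {κ : Type*}

theorem stdJR_mulVec_single (z : Fin n ⊕ Fin n) :
    stdJR n *ᵥ Pi.single z 1 = Sum.elim (fun _ => (-1 : ℝ)) (fun _ => 1) z • Pi.single z.swap 1 := by
  ext x
  rcases z with j | j <;> rcases x with i | i <;>
    simp [stdJR, mulVec_single, Pi.single_apply, one_apply, eq_comm, neg_ite]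

def StdJRInvariantTranslates (ω : (Fin n ⊕ Fin n → ℝ) [⋀^κ]→ₗ[ℝ] ℝ) : Prop :=
  ∀ g : Matrix (Fin n ⊕ Fin n) (Fin n ⊕ Fin n) ℝ, g.det = 1 →
    ω.compLinearMap (toLin' (g * stdJR n)) = ω.compLinearMap (toLin' g)

theorem stdJRInvariantTranslates_of_conj {ω : (Fin n ⊕ Fin n → ℝ) [⋀^κ]→ₗ[ℝ] ℝ}
    (hinv : ∀ g : Matrix (Fin n ⊕ Fin n) (Fin n ⊕ Fin n) ℝ, g.det = 1 →
      ∀ v : κ → (Fin n ⊕ Fin n → ℝ), ω (fun i => (g * stdJR n * g⁻¹) *ᵥ v i) = ω v) :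
    StdJRInvariantTranslates ω := by
  intro g hg
  ext v
  have hg' : g⁻¹ * g = 1 := nonsing_inv_mul g (by simp [hg])
  simpa [mulVec_mulVec, Matrix.mul_assoc, hg'] using hinv g hg (fun i => g *ᵥ v i)

theorem StdJRInvariantTranslates.compLinearMap {ω : (Fin n ⊕ Fin n → ℝ) [⋀^κ]→ₗ[ℝ] ℝ}
    (hω : StdJRInvariantTranslates ω) {h : Matrix (Fin n ⊕ Fin n) (Fin n ⊕ Fin n) ℝ}
    (hh : h.det = 1) : StdJRInvariantTranslates (ω.compLinearMap (toLin' h)) := by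
  intro g hg
  simp only [AlternatingMap.compLinearMap_assoc, ← toLin'_mul, ← Matrix.mul_assoc]
  exact hω (h * g) (by rw [det_mul, hh, hg, one_mul])

theorem StdJRInvariantTranslates.apply_single_eq_zero [Fintype κ]
    {ω : (Fin n ⊕ Fin n → ℝ) [⋀^κ]→ₗ[ℝ] ℝ} (hω : StdJRInvariantTranslates ω)
    {f : κ → Fin n ⊕ Fin n} (hf : Injective f) {i₀ : κ} (hi₀ : (f i₀).swap ∉ Set.range f) :
    ω (fun i => Pi.single (f i) 1) = 0 := by
  set c : ℝ := ∏ i, Sum.elim (fun _ => (-1 : ℝ)) (fun _ => 1) (f i)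
  have diagonal_translate : ∀ d : Fin n ⊕ Fin n → ℝ, ∏ z, d z = 1 →
      c * (∏ i, d (f i).swap) * ω (fun i => Pi.single (f i).swap 1) =
        (∏ i, d (f i)) * ω (fun i => Pi.single (f i) 1) := by
    intro d hd
    have hdJ_single : ∀ z, (diagonal d * stdJR n) *ᵥ Pi.single z 1 =
        (Sum.elim (fun _ => (-1 : ℝ)) (fun _ => 1) z * d z.swap) • Pi.single z.swap 1 := by
      intro z
      rw [← mulVec_mulVec, stdJR_mulVec_single, mulVec_smul, diagonal_mulVec_single]
      ext x
      simp [Pi.single_apply]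
    have hd_single : ∀ z, diagonal d *ᵥ Pi.single z 1 = d z • Pi.single (id z) 1 := by
      intro z
      ext x
      simp [Pi.single_apply]
    have := congrArg (· fun i => Pi.single (f i) (1 : ℝ)) (hω (diagonal d) (by rwa [det_diagonal]))
    simpa only [ω.compLinearMap_toLin'_apply_single hdJ_single, ω.compLinearMap_toLin'_apply_single hd_single,
      Finset.prod_mul_distrib, smul_eq_mul, id] using this
  have hswap : Injective (Sum.swap ∘ f) := Sum.swap_leftInverse.injective.comp hf
  have hi₀' : f i₀ ∉ Set.range (Sum.swap ∘ f) := fun ⟨j, hj⟩ => hi₀ ⟨j, by simp [← hj]⟩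
  have h₁ := diagonal_translate 1 (by simp)
  have h₂ := diagonal_translate (Pi.mulSingle (f i₀) 2⁻¹ * Pi.mulSingle (f i₀).swap 2)
    (by simp [Finset.prod_mul_distrib])
  simp only [Pi.mul_apply, Finset.prod_mul_distrib, Fintype.prod_pi_mulSingle_comp hf,
    ← Function.comp_apply (f := Sum.swap) (g := f), Fintype.prod_pi_mulSingle_comp hswap] at h₂
  simp only [Pi.one_apply, Finset.prod_const_one, mul_one, one_mul, hi₀', ↓reduceIte,
    Function.comp_apply, Set.mem_range, exists_apply_eq_apply, hi₀] at h₁ h₂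
  linarith

end StdJR

theorem alternating_form_invariant_under_all_complex_structures_is_zero_general
    (n p : ℕ) (hp0 : 0 < 2 * p) (hp : 2 * p < 2 * n)
    (ω : AlternatingMap ℝ (Fin n ⊕ Fin n → ℝ) ℝ (Fin (2 * p)))
    (hinv : ∀ g : Matrix (Fin n ⊕ Fin n) (Fin n ⊕ Fin n) ℝ, g.det = 1 →
        ∀ v : Fin (2 * p) → (Fin n ⊕ Fin n → ℝ),
          ω (fun i => (g * stdJR n * g⁻¹).mulVec (v i)) = ω v) :
    ω = 0 := by
  classical
  refine (Pi.basisFun ℝ _).ext_alternating fun f hf => ?_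
  obtain ⟨w, hw⟩ : ∃ w, w ∉ Set.range f := by
    by_contra! hsurj
    have := Fintype.card_le_of_surjective f hsurj
    simp only [Fintype.card_fin, Fintype.card_sum] at this
    omega
  obtain ⟨σ, hσ⟩ := exists_perm_apply_notMem_range_comp Sum.swap hw (i₀ := ⟨0, hp0⟩)
    (by cases f ⟨0, hp0⟩ <;> simp)
  have hh_single : ∀ i, (diagonal (Pi.mulSingle w (Equiv.Perm.sign σ : ℝ)) * σ.permMatrix ℝ) *ᵥ
      Pi.single (σ (f i)) 1 = Pi.single (f i) 1 := fun i =>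
    diagonal_mulSingle_mul_permMatrix_mulVec_single σ _ fun he => hw ⟨i, he⟩
  have := ((stdJRInvariantTranslates_of_conj hinv).compLinearMap
    (det_diagonal_mulSingle_sign_mul_permMatrix σ w)).apply_single_eq_zero
    (σ.injective.comp hf) hσ
  simpa only [AlternatingMap.compLinearMap_apply, toLin'_apply, Function.comp_apply, hh_single,
    Pi.basisFun_apply, AlternatingMap.zero_apply] using this

/-- Let `n ≥ 1` and `0 < 2p < 2n`.  Let `ω` be an alternating
`2p`-multilinear real-valued form on `ℝ^{2n}` which is invariant under every linear
complex structure `J = g J₀ g⁻¹` with `g ∈ SL(2n, ℝ)`, i.e.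
`ω(J v₁, …, J v_{2p}) = ω(v₁, …, v_{2p})` for all arguments.  Then `ω = 0`. -/
theorem alternating_form_invariant_under_all_complex_structures_is_zero
    (n p : ℕ) (hn : 1 ≤ n) (hp0 : 0 < 2 * p) (hp : 2 * p < 2 * n)
    (ω : AlternatingMap ℝ (Fin n ⊕ Fin n → ℝ) ℝ (Fin (2 * p)))
    (hinv : ∀ g : Matrix (Fin n ⊕ Fin n) (Fin n ⊕ Fin n) ℝ, g.det = 1 →
        ∀ v : Fin (2 * p) → (Fin n ⊕ Fin n → ℝ),
          ω (fun i => (g * stdJR n * g⁻¹).mulVec (v i)) = ω v) :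
    ω = 0 :=
  alternating_form_invariant_under_all_complex_structures_is_zero_general n p hp0 hp ω hinv
end
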